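/- arXiv:2109.11582 — 7 statements merged into one kernel-verified Lean document; each statement's English description precedes it below -/
import Mathlib

section
/- Let C_f > 0. Let a : [0,∞) → ℝ and F : [0,∞) → ℝ be continuous functions with a(t) > 0 and 0 ≤ F(t) ≤ C_f for all t ≥ 0, and let P : [0,∞) → ℝ be differentiable with P'(t) = a(t)·(F(t)·P(t) − P(t)³) for all t ≥ 0. If 0 ≤ P(0) ≤ √C_f and P(t) ≥ 0 for all t ≥ 0, then P(t) ≤ √C_f for all t ≥ 0. -/
/-- Invariance part of Lemma 1: the motor power stays below `√C_f`. -/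
theorem stmt0 (Cf : ℝ) (hCf : 0 < Cf) (a F P : ℝ → ℝ)
    (ha_cont : ContinuousOn a (Set.Ici (0:ℝ)))
    (hF_cont : ContinuousOn F (Set.Ici (0:ℝ)))
    (ha_pos : ∀ t ≥ (0:ℝ), 0 < a t)
    (hF_nonneg : ∀ t ≥ (0:ℝ), 0 ≤ F t)
    (hF_le : ∀ t ≥ (0:ℝ), F t ≤ Cf)
    (hP : ∀ t ≥ (0:ℝ), HasDerivAt P (a t * (F t * P t - (P t)^3)) t)
    (hP0_lb : 0 ≤ P 0) (hP0_ub : P 0 ≤ Real.sqrt Cf)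
    (hP_nonneg : ∀ t ≥ (0:ℝ), 0 ≤ P t) :
    ∀ t ≥ (0:ℝ), P t ≤ Real.sqrt Cf := by
  intro t ht
  refine le_of_forall_pos_le_add fun ε hε => ?_
  have hsq : 0 < Real.sqrt Cf := Real.sqrt_pos.2 hCf
  have key : ∀ ⦃x⦄, x ∈ Set.Icc (0:ℝ) t → P x ≤ (fun _ : ℝ => Real.sqrt Cf + ε) x := by
    refine image_le_of_deriv_right_lt_deriv_boundary
      (f := P) (f' := fun x => a x * (F x * P x - (P x)^3))
      (B := fun _ => Real.sqrt Cf + ε) (B' := fun _ => 0)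
      ?_ ?_ ?_ (fun x => hasDerivAt_const x _) ?_
    · intro x hx
      exact (hP x hx.1).continuousAt.continuousWithinAt
    · intro x hx
      exact (hP x hx.1).hasDerivWithinAt
    · exact le_add_of_le_of_nonneg hP0_ub hε.le
    · intro x hx hPx
      have hx0 : (0:ℝ) ≤ x := hx.1
      have hPx' : P x = Real.sqrt Cf + ε := hPx
      have hPxpos : 0 < P x := by rw [hPx']; positivity
      have h1 : F x < (P x)^2 := by
        have : Cf < (P x)^2 := by
          rw [hPx']
          nlinarith [Real.sq_sqrt hCf.le, hsq]
        exact lt_of_le_of_lt (hF_le x hx0) this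
      have : F x * P x - (P x)^3 < 0 := by nlinarith
      exact mul_neg_of_pos_of_neg (ha_pos x hx0) this
  exact key ⟨ht, le_refl t⟩
end

section
/- Let C_f > 0. Let a : [0,∞) → ℝ and F : [0,∞) → ℝ be continuous and bounded functions with a(t) > 0 and 0 ≤ F(t) ≤ C_f for all t ≥ 0. For every initial value P₀ ∈ [0, √C_f] there exists a unique differentiable function P : [0,∞) → ℝ satisfying P'(t) = a(t)·(F(t)·P(t) − P(t)³) for all t ≥ 0 and P(0) = P₀; moreover this solution satisfies P(t) ∈ [0, √C_f] for all t ≥ 0. -/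
open Set Filter Metric Topology

lemma stmt2_maxsq_hasDerivAt (y : ℝ) :
    HasDerivAt (fun z : ℝ => (max z 0)^2) (2 * max y 0) y := by
  rcases lt_trichotomy y 0 with hy | hy | hy
  · have hev : ∀ᶠ z in 𝓝 y, (fun z : ℝ => (max z 0)^2) z = (fun _ : ℝ => (0:ℝ)) z := by
      filter_upwards [Iio_mem_nhds hy] with z hz
      simp [max_eq_right (le_of_lt (Set.mem_Iio.mp hz))]
    have h0 : HasDerivAt (fun _ : ℝ => (0:ℝ)) 0 y := hasDerivAt_const y 0
    have := h0.congr_of_eventuallyEq hev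
    simpa [max_eq_right hy.le] using this
  · subst hy
    rw [hasDerivAt_iff_tendsto_slope]
    have hb : ∀ z : ℝ, ‖slope (fun z : ℝ => (max z 0)^2) 0 z‖ ≤ |z| := by
      intro z
      rcases le_or_gt z 0 with h | h
      · simp [slope, max_eq_right h]
      · have hz : slope (fun z : ℝ => (max z 0)^2) 0 z = z := by
          rw [slope_def_field, max_eq_left h.le]
          field_simp
          simp
          ring
        rw [hz]
        simp [Real.norm_eq_abs]
    have : Tendsto (fun z : ℝ => |z|) (𝓝[≠] (0:ℝ)) (𝓝 0) := by
      have := (continuous_abs.tendsto (0:ℝ))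
      simpa using this.mono_left nhdsWithin_le_nhds
    have := squeeze_zero_norm hb this
    simpa using this
  · have hev : ∀ᶠ z in 𝓝 y, (fun z : ℝ => (max z 0)^2) z = (fun z : ℝ => z^2) z := by
      filter_upwards [Ioi_mem_nhds hy] with z hz
      simp [max_eq_left (le_of_lt (Set.mem_Ioi.mp hz))]
    have h0 : HasDerivAt (fun z : ℝ => z^2) (2*y) y := by
      simpa using (hasDerivAt_pow 2 y)
    have := h0.congr_of_eventuallyEq hev
    simpa [max_eq_left hy.le] using this

lemma stmt2_clampsq_hasDerivAt {s : ℝ} (hs : 0 < s) (x : ℝ) :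
    HasDerivAt (fun z : ℝ => (z - max 0 (min z s))^2)
      (2 * (x - max 0 (min x s))) x := by
  have hfun : (fun z : ℝ => (z - max 0 (min z s))^2)
      = fun z : ℝ => (max (z - s) 0)^2 + (max (-z) 0)^2 := by
    funext z
    rcases le_total z 0 with h | h
    · rw [min_eq_left (h.trans hs.le), max_eq_left h,
        max_eq_right (by linarith : z - s ≤ 0), max_eq_left (by linarith : (0:ℝ) ≤ -z)]
      ring
    · rcases le_total z s with h2 | h2
      · rw [min_eq_left h2, max_eq_right h, max_eq_right (by linarith : z - s ≤ 0),
          max_eq_right (by linarith : -z ≤ 0)]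
        ring
      · rw [min_eq_right h2, max_eq_right hs.le, max_eq_left (by linarith : (0:ℝ) ≤ z - s),
          max_eq_right (by linarith : -z ≤ 0)]
        ring
  have d1 : HasDerivAt (fun z : ℝ => (max (z - s) 0)^2) (2 * max (x - s) 0) x := by
    have := (stmt2_maxsq_hasDerivAt (x - s)).comp x ((hasDerivAt_id x).sub_const s)
    simpa [Function.comp_def] using this
  have d2 : HasDerivAt (fun z : ℝ => (max (-z) 0)^2) (-(2 * max (-x) 0)) x := by
    have := (stmt2_maxsq_hasDerivAt (-x)).comp x (hasDerivAt_neg x)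
    simpa [Function.comp_def] using this
  have hsum := d1.add d2
  rw [hfun]
  refine HasDerivAt.congr_deriv hsum ?_
  rcases le_total x 0 with h | h
  · rw [min_eq_left (h.trans hs.le), max_eq_left h,
      max_eq_right (by linarith : x - s ≤ 0), max_eq_left (by linarith : (0:ℝ) ≤ -x)]
    ring
  · rcases le_total x s with h2 | h2
    · rw [min_eq_left h2, max_eq_right h, max_eq_right (by linarith : x - s ≤ 0),
        max_eq_right (by linarith : -x ≤ 0)]
      ring
    · rw [min_eq_right h2, max_eq_right hs.le, max_eq_left (by linarith : (0:ℝ) ≤ x - s),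
        max_eq_right (by linarith : -x ≤ 0)]
      ring

lemma stmt2_exists_global (Cf : ℝ) (hCf : 0 < Cf) (aa FF : ℝ → ℝ)
    (haa : Continuous aa) (hFF : Continuous FF)
    (haa_pos : ∀ t, 0 < aa t) (Ma : ℝ) (hMa : ∀ t, aa t ≤ Ma)
    (hFF0 : ∀ t, 0 ≤ FF t) (hFFC : ∀ t, FF t ≤ Cf)
    (P₀ : ℝ) (hP₀ : P₀ ∈ Set.Icc (0:ℝ) (Real.sqrt Cf)) :
    ∃ P : ℝ → ℝ, P 0 = P₀ ∧ ∀ t, 0 ≤ t →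
      P t ∈ Set.Icc (0:ℝ) (Real.sqrt Cf) ∧
      HasDerivAt P (aa t * (FF t * P t - (P t)^3)) t := by
  set s : ℝ := Real.sqrt Cf with hs_def
  have hs : 0 < s := Real.sqrt_pos.mpr hCf
  have hs2 : s ^ 2 = Cf := Real.sq_sqrt hCf.le
  have hMa0 : 0 < Ma := lt_of_lt_of_le (haa_pos 0) (hMa 0)
  -- the clamp
  set cl : ℝ → ℝ := fun x => max 0 (min x s) with hcl_def
  have hcl_mem : ∀ x, cl x ∈ Set.Icc (0:ℝ) s := fun x =>
    ⟨le_max_left _ _, max_le hs.le (min_le_right _ _)⟩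
  have hcl_eq : ∀ x ∈ Set.Icc (0:ℝ) s, cl x = x := by
    intro x hx
    simp only [hcl_def]
    rw [min_eq_left hx.2, max_eq_right hx.1]
  have hcl_lip : ∀ x y, |cl x - cl y| ≤ |x - y| := by
    intro x y
    simp only [hcl_def]
    rw [max_comm 0 (min x s), max_comm 0 (min y s)]
    refine le_trans (abs_max_sub_max_le_abs _ _ _) ?_
    refine le_trans (abs_min_sub_min_le_max x s y s) ?_
    simp
  -- the clamped vector field
  set v : ℝ → ℝ → ℝ := fun t x => aa t * (FF t * cl x - (cl x)^3) with hv_def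
  -- global bound
  set C1 : ℝ := Ma * (Cf * s + s ^ 3) with hC1_def
  have hC1pos : 0 < C1 := by
    have : 0 < Cf * s + s ^ 3 := by positivity
    exact mul_pos hMa0 this
  have hbound : ∀ t x, |v t x| ≤ C1 := by
    intro t x
    obtain ⟨hu0, hus⟩ := hcl_mem x
    have h1 : |FF t * cl x - (cl x)^3| ≤ Cf * s + s ^ 3 := by
      have hcube : (cl x)^3 ≤ s^3 := pow_le_pow_left₀ hu0 hus 3
      have hcube0 : 0 ≤ (cl x)^3 := pow_nonneg hu0 3
      have hprod : FF t * cl x ≤ Cf * s := mul_le_mul (hFFC t) hus hu0 hCf.le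
      have hprod0 : 0 ≤ FF t * cl x := mul_nonneg (hFF0 t) hu0
      have hCs : 0 ≤ Cf * s := by positivity
      rw [abs_le]
      constructor <;> nlinarith
    rw [hv_def]
    simp only
    rw [abs_mul, abs_of_pos (haa_pos t)]
    calc aa t * |FF t * cl x - (cl x)^3| ≤ Ma * (Cf * s + s ^ 3) :=
      mul_le_mul (hMa t) h1 (abs_nonneg _) hMa0.le
    _ = C1 := rfl
  -- global Lipschitz
  set K0 : ℝ := Ma * (4 * Cf) with hK0_def
  have hkey : ∀ t x y, |v t x - v t y| ≤ K0 * |x - y| := by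
    intro t x y
    obtain ⟨hu0, hus⟩ := hcl_mem x
    obtain ⟨hw0, hws⟩ := hcl_mem y
    have hd := hcl_lip x y
    have e : v t x - v t y
        = aa t * ((cl x - cl y) * (FF t - ((cl x)^2 + cl x * cl y + (cl y)^2))) := by
      rw [hv_def]; ring
    rw [e, abs_mul, abs_mul, abs_of_pos (haa_pos t)]
    have hb : |FF t - ((cl x)^2 + cl x * cl y + (cl y)^2)| ≤ 4 * Cf := by
      rw [abs_le]
      constructor
      · nlinarith [hFF0 t, hFFC t, mul_nonneg hu0 hw0]
      · nlinarith [hFF0 t, hFFC t, mul_nonneg hu0 hw0]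
    calc aa t * (|cl x - cl y| * |FF t - ((cl x)^2 + cl x * cl y + (cl y)^2)|)
        ≤ Ma * (|x - y| * (4 * Cf)) := by
          refine mul_le_mul (hMa t) ?_ (by positivity) hMa0.le
          exact mul_le_mul hd hb (abs_nonneg _) (abs_nonneg _)
      _ = K0 * |x - y| := by rw [hK0_def]; ring
  have hlipW : ∀ t, LipschitzWith (Real.toNNReal K0) (v t) := by
    intro t
    rw [lipschitzWith_iff_dist_le_mul]
    intro x y
    rw [Real.dist_eq, Real.dist_eq, Real.coe_toNNReal']
    exact le_trans (hkey t x y)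
      (mul_le_mul_of_nonneg_right (le_max_left _ _) (abs_nonneg _))
  -- Picard–Lindelöf on each interval [-(n+1), n+1]
  have hex : ∀ n : ℕ, ∃ f : ℝ → ℝ, f 0 = P₀ ∧
      ∀ τ ∈ Set.Icc (-(n+1:ℝ)) (n+1), HasDerivWithinAt f (v τ (f τ))
        (Set.Icc (-(n+1:ℝ)) (n+1)) τ := by
    intro n
    have hn1 : (0:ℝ) < n + 1 := by positivity
    have hpl : IsPicardLindelof v (tmin := -(n+1:ℝ)) (tmax := n+1)
        ⟨0, by constructor <;> linarith⟩ P₀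
        (Real.toNNReal (C1 * (n+1))) 0 (Real.toNNReal C1) (Real.toNNReal K0) := by
      refine ⟨?_, ?_, ?_, ?_⟩
      · exact fun τ _ => (hlipW τ).lipschitzOnWith
      · intro x _
        exact (haa.mul ((hFF.mul continuous_const).sub continuous_const)).continuousOn
      · intro τ _ x _
        rw [Real.norm_eq_abs, Real.coe_toNNReal _ hC1pos.le]
        exact hbound τ x
      · simp only [NNReal.coe_zero, sub_zero, Real.coe_toNNReal _ hC1pos.le,
          Real.coe_toNNReal _ (by positivity : (0:ℝ) ≤ C1 * (n+1))]
        rw [zero_sub, neg_neg, max_self]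
    exact hpl.exists_eq_forall_mem_Icc_hasDerivWithinAt₀
  choose f hf0 hfd using hex
  -- interior derivatives
  have hder : ∀ n : ℕ, ∀ t ∈ Set.Ioo (-(n+1:ℝ)) (n+1), HasDerivAt (f n) (v t (f n t)) t := by
    intro n t ht
    exact (hfd n t (Set.mem_Icc_of_Ioo ht)).hasDerivAt (Icc_mem_nhds ht.1 ht.2)
  -- consistency
  have heqf : ∀ n m : ℕ, n ≤ m → ∀ t : ℝ, |t| < (n:ℝ) + 1 → f n t = f m t := by
    intro n m hnm t ht
    have hnm' : (n:ℝ) ≤ (m:ℝ) := Nat.cast_le.mpr hnm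
    have hsub : Set.Ioo (-(n+1:ℝ)) (n+1) ⊆ Set.Ioo (-(m+1:ℝ)) (m+1) :=
      Set.Ioo_subset_Ioo (by linarith) (by linarith)
    have hn1 : (0:ℝ) < (n:ℝ) + 1 := by positivity
    have h0mem : (0:ℝ) ∈ Set.Ioo (-(n+1:ℝ)) (n+1) := ⟨by linarith, hn1⟩
    have := ODE_solution_unique_of_mem_Ioo
      (v := v) (s := fun _ => Set.univ) (K := Real.toNNReal K0)
      (fun τ _ => (hlipW τ).lipschitzOnWith) h0mem
      (fun τ hτ => ⟨hder n τ hτ, trivial⟩)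
      (fun τ hτ => ⟨hder m τ (hsub hτ), trivial⟩)
      ((hf0 n).trans (hf0 m).symm)
    exact this (abs_lt.mp ht)
  -- the global solution
  set P : ℝ → ℝ := fun t => f ⌊|t|⌋₊ t with hP_def
  have hPn : ∀ (n : ℕ) (t : ℝ), |t| < (n:ℝ) + 1 → P t = f n t := by
    intro n t ht
    have h1 : |t| < (⌊|t|⌋₊ : ℝ) + 1 := Nat.lt_floor_add_one _
    have h2 : P t = f (max ⌊|t|⌋₊ n) t := by
      rw [hP_def]
      exact heqf _ _ (le_max_left _ _) t h1
    have h3 : f n t = f (max ⌊|t|⌋₊ n) t := by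
      refine heqf _ _ (le_max_right _ _) t ht
    rw [h2, ← h3]
  have hP0 : P 0 = P₀ := by
    have : P 0 = f 0 0 := hPn 0 0 (by norm_num)
    rw [this, hf0]
  have hPd : ∀ t, HasDerivAt P (v t (P t)) t := by
    intro t
    have ht : |t| < (⌊|t|⌋₊ : ℝ) + 1 := Nat.lt_floor_add_one _
    set n := ⌊|t|⌋₊
    have htIoo : t ∈ Set.Ioo (-((n:ℝ)+1)) ((n:ℝ)+1) := abs_lt.mp ht
    have hev : (fun τ => P τ) =ᶠ[𝓝 t] (fun τ => f n τ) := by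
      have hopen : ∀ᶠ τ in 𝓝 t, |τ| < (n:ℝ) + 1 :=
        (continuous_abs.continuousAt).eventually_lt continuousAt_const ht
      filter_upwards [hopen] with τ hτ
      exact hPn n τ hτ
    have hd := (hder n t htIoo).congr_of_eventuallyEq hev
    rw [hPn n t ht]
    exact hd
  -- invariance
  have hinv : ∀ t, 0 ≤ t → P t ∈ Set.Icc (0:ℝ) s := by
    have hhd : ∀ t, HasDerivAt (fun τ => (P τ - cl (P τ))^2)
        (2 * (P t - cl (P t)) * v t (P t)) t := by
      intro t
      have := (stmt2_clampsq_hasDerivAt hs (P t)).comp t (hPd t)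
      simpa [hcl_def, Function.comp_def] using this
    have hneg : ∀ t, 2 * (P t - cl (P t)) * v t (P t) ≤ 0 := by
      intro t
      set x := P t
      rcases le_total x 0 with h | h
      · have hclx : cl x = 0 := by
          simp only [hcl_def]
          rw [min_eq_left (h.trans hs.le), max_eq_left h]
        rw [hv_def]
        simp [hclx]
      · rcases le_total x s with h2 | h2
        · have hclx : cl x = x := hcl_eq x ⟨h, h2⟩
          rw [hclx]
          simp
        · have hclx : cl x = s := by
            simp only [hcl_def]
            rw [min_eq_right h2, max_eq_right hs.le]
          have hvx : v t x = aa t * (FF t * s - s^3) := by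
            rw [hv_def]; simp only; rw [hclx]
          rw [hvx, hclx]
          have hfac : FF t * s - s^3 ≤ 0 := by nlinarith [hFFC t]
          have h1 : aa t * (FF t * s - s^3) ≤ 0 :=
            mul_nonpos_of_nonneg_of_nonpos (haa_pos t).le hfac
          have h2' : (0:ℝ) ≤ 2 * (x - s) := by linarith
          exact mul_nonpos_of_nonneg_of_nonpos h2' h1
    have hmono : Antitone (fun τ => (P τ - cl (P τ))^2) := by
      apply antitone_of_deriv_nonpos
      · intro τ; exact (hhd τ).differentiableAt
      · intro τ; rw [(hhd τ).deriv]; exact hneg τ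
    have hzero0 : (P 0 - cl (P 0))^2 = 0 := by
      rw [hP0, hcl_eq P₀ hP₀]; ring
    intro t ht
    have hPt : P t = cl (P t) := by
      have h1 : (P t - cl (P t))^2 ≤ 0 := hzero0 ▸ hmono ht
      have h2 : (0:ℝ) ≤ (P t - cl (P t))^2 := sq_nonneg _
      have h3 : (P t - cl (P t))^2 = 0 := le_antisymm h1 h2
      have h4 := pow_eq_zero_iff (n := 2) (by norm_num) |>.mp h3
      linarith
    rw [hPt]; exact hcl_mem (P t)
  refine ⟨P, hP0, fun t ht => ⟨hinv t ht, ?_⟩⟩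
  have h1 := hPd t
  have h2 : v t (P t) = aa t * (FF t * P t - (P t)^3) := by
    rw [hv_def]; simp only; rw [hcl_eq (P t) (hinv t ht)]
  rwa [h2] at h1


/-- Lemma 1 in full: existence, uniqueness, global definition on `[0,∞)`, and
invariance of `[0, √C_f]` for the controller ODE. -/
theorem stmt2 (Cf : ℝ) (hCf : 0 < Cf) (a F : ℝ → ℝ)
    (ha_cont : ContinuousOn a (Set.Ici (0:ℝ)))
    (hF_cont : ContinuousOn F (Set.Ici (0:ℝ)))
    (ha_pos : ∀ t ≥ (0:ℝ), 0 < a t)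
    (ha_bdd : ∃ Ma : ℝ, ∀ t ≥ (0:ℝ), a t ≤ Ma)
    (hF_nonneg : ∀ t ≥ (0:ℝ), 0 ≤ F t)
    (hF_le : ∀ t ≥ (0:ℝ), F t ≤ Cf) :
    ∀ P₀ ∈ Set.Icc (0:ℝ) (Real.sqrt Cf),
      ∃ P : ℝ → ℝ,
        (∀ t ≥ (0:ℝ), HasDerivAt P (a t * (F t * P t - (P t)^3)) t) ∧
        P 0 = P₀ ∧
        (∀ t ≥ (0:ℝ), P t ∈ Set.Icc (0:ℝ) (Real.sqrt Cf)) ∧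
        (∀ Q : ℝ → ℝ,
          (∀ t ≥ (0:ℝ), HasDerivAt Q (a t * (F t * Q t - (Q t)^3)) t) →
          Q 0 = P₀ → ∀ t ≥ (0:ℝ), Q t = P t) := by
  intro P₀ hP₀
  obtain ⟨Ma, hMa⟩ := ha_bdd
  -- extended coefficients
  set aa : ℝ → ℝ := fun t => a (max t 0) with haa_def
  set FF : ℝ → ℝ := fun t => F (max t 0) with hFF_def
  have hmax : ∀ t : ℝ, max t 0 ∈ Set.Ici (0:ℝ) := fun t => le_max_right t 0
  have haa_cont : Continuous aa :=
    ha_cont.comp_continuous (continuous_id.max continuous_const) hmax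
  have hFF_cont : Continuous FF :=
    hF_cont.comp_continuous (continuous_id.max continuous_const) hmax
  have haa_pos : ∀ t, 0 < aa t := fun t => ha_pos _ (hmax t)
  have haa_le : ∀ t, aa t ≤ Ma := fun t => hMa _ (hmax t)
  have hFF0 : ∀ t, 0 ≤ FF t := fun t => hF_nonneg _ (hmax t)
  have hFFC : ∀ t, FF t ≤ Cf := fun t => hF_le _ (hmax t)
  have haa_eq : ∀ t : ℝ, 0 ≤ t → aa t = a t := by
    intro t ht; rw [haa_def]; simp only; rw [max_eq_left ht]
  have hFF_eq : ∀ t : ℝ, 0 ≤ t → FF t = F t := by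
    intro t ht; rw [hFF_def]; simp only; rw [max_eq_left ht]
  have hMa0 : 0 < Ma := lt_of_lt_of_le (haa_pos 0) (haa_le 0)
  -- global solution for the extended field
  obtain ⟨P, hP0, hP⟩ := stmt2_exists_global Cf hCf aa FF haa_cont hFF_cont
    haa_pos Ma haa_le hFF0 hFFC P₀ hP₀
  have hPd : ∀ t ≥ (0:ℝ), HasDerivAt P (a t * (F t * P t - (P t)^3)) t := by
    intro t ht
    have := (hP t ht).2
    rwa [haa_eq t ht, hFF_eq t ht] at this
  refine ⟨P, hPd, hP0, fun t ht => (hP t ht).1, ?_⟩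
  -- uniqueness
  intro Q hQd hQ0 t ht
  -- bound both trajectories on [0, t]
  have hQc : ContinuousOn Q (Set.Icc 0 t) := fun τ hτ =>
    ((hQd τ hτ.1).continuousAt).continuousWithinAt
  have hPc : ContinuousOn P (Set.Icc 0 t) := fun τ hτ =>
    ((hPd τ hτ.1).continuousAt).continuousWithinAt
  obtain ⟨M₁, hM₁⟩ := (isCompact_Icc (a := (0:ℝ)) (b := t)).exists_bound_of_continuousOn hQc
  obtain ⟨M₂, hM₂⟩ := (isCompact_Icc (a := (0:ℝ)) (b := t)).exists_bound_of_continuousOn hPc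
  set M : ℝ := max M₁ M₂ with hM_def
  -- the unclamped field
  set vo : ℝ → ℝ → ℝ := fun τ x => aa τ * (FF τ * x - x^3) with hvo_def
  set K1 : ℝ := Ma * (Cf + 3 * M^2) with hK1_def
  have hvlip : ∀ τ : ℝ, LipschitzOnWith (Real.toNNReal K1) (vo τ)
      (Metric.closedBall (0:ℝ) M) := by
    intro τ
    rw [lipschitzOnWith_iff_dist_le_mul]
    intro x hx y hy
    rw [Real.dist_eq, Real.dist_eq, Real.coe_toNNReal']
    rw [Metric.mem_closedBall, Real.dist_eq, sub_zero] at hx hy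
    have key : |vo τ x - vo τ y| ≤ K1 * |x - y| := by
      have e : vo τ x - vo τ y = aa τ * ((x - y) * (FF τ - (x^2 + x*y + y^2))) := by
        rw [hvo_def]; ring
      rw [e, abs_mul, abs_mul, abs_of_pos (haa_pos τ)]
      have hM0 : (0:ℝ) ≤ M := (abs_nonneg x).trans hx
      have hb : |FF τ - (x^2 + x*y + y^2)| ≤ Cf + 3 * M^2 := by
        have h1 : |x*y| ≤ M^2 := by
          rw [abs_mul]
          calc |x| * |y| ≤ M * M := mul_le_mul hx hy (abs_nonneg _) hM0
            _ = M^2 := (sq M).symm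
        have h1' : -(M^2) ≤ x*y ∧ x*y ≤ M^2 := abs_le.mp h1
        have h2 : x^2 ≤ M^2 := by nlinarith [sq_abs x, abs_nonneg x]
        have h3 : y^2 ≤ M^2 := by nlinarith [sq_abs y, abs_nonneg y]
        rw [abs_le]
        constructor
        · nlinarith [hFF0 τ, sq_nonneg x, sq_nonneg y, h1'.2]
        · nlinarith [hFFC τ, sq_nonneg x, sq_nonneg y, h1'.1]
      calc aa τ * (|x - y| * |FF τ - (x^2 + x*y + y^2)|)
          ≤ Ma * (|x - y| * (Cf + 3 * M^2)) := by
            refine mul_le_mul (haa_le τ) ?_ ?_ hMa0.le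
            · exact mul_le_mul_of_nonneg_left hb (abs_nonneg _)
            · exact mul_nonneg (abs_nonneg _) (abs_nonneg _)
        _ = K1 * |x - y| := by rw [hK1_def]; ring
    calc |vo τ x - vo τ y| ≤ K1 * |x - y| := key
      _ ≤ max K1 0 * |x - y| :=
        mul_le_mul_of_nonneg_right (le_max_left _ _) (abs_nonneg _)
  have hvoQ : ∀ τ : ℝ, 0 ≤ τ → vo τ (Q τ) = a τ * (F τ * Q τ - (Q τ)^3) := by
    intro τ hτ
    rw [hvo_def]; simp only; rw [haa_eq τ hτ, hFF_eq τ hτ]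
  have hvoP : ∀ τ : ℝ, 0 ≤ τ → vo τ (P τ) = a τ * (F τ * P τ - (P τ)^3) := by
    intro τ hτ
    rw [hvo_def]; simp only; rw [haa_eq τ hτ, hFF_eq τ hτ]
  have hQ' : ∀ τ ∈ Set.Ico (0:ℝ) t, HasDerivWithinAt Q (vo τ (Q τ)) (Set.Ici τ) τ := by
    intro τ hτ
    rw [hvoQ τ hτ.1]
    exact (hQd τ hτ.1).hasDerivWithinAt
  have hP' : ∀ τ ∈ Set.Ico (0:ℝ) t, HasDerivWithinAt P (vo τ (P τ)) (Set.Ici τ) τ := by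
    intro τ hτ
    rw [hvoP τ hτ.1]
    exact (hPd τ hτ.1).hasDerivWithinAt
  have hQs : ∀ τ ∈ Set.Ico (0:ℝ) t, Q τ ∈ Metric.closedBall (0:ℝ) M := by
    intro τ hτ
    rw [mem_closedBall_zero_iff]
    exact (hM₁ τ (Set.Ico_subset_Icc_self hτ)).trans (le_max_left _ _)
  have hPs : ∀ τ ∈ Set.Ico (0:ℝ) t, P τ ∈ Metric.closedBall (0:ℝ) M := by
    intro τ hτ
    rw [mem_closedBall_zero_iff]
    exact (hM₂ τ (Set.Ico_subset_Icc_self hτ)).trans (le_max_right _ _)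
  have := ODE_solution_unique_of_mem_Icc_right
    (v := vo) (s := fun _ => Metric.closedBall (0:ℝ) M) (K := Real.toNNReal K1)
    (fun τ _ => hvlip τ) hQc hQ' hQs hPc hP' hPs (hQ0.trans hP0.symm)
  exact this ⟨ht, le_rfl⟩
end

section
/- Let C_f ≥ c_f > 0. Let a : [0,∞) → ℝ and F : [0,∞) → ℝ be continuous functions with a(t) > 0 and c_f ≤ F(t) ≤ C_f for all t ≥ 0, and let P : [0,∞) → ℝ be differentiable with P'(t) = a(t)·(F(t)·P(t) − P(t)³) for all t ≥ 0. If P(0) ≥ √c_f, then P(t) ≥ √c_f for all t ≥ 0. -/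
/-- Lemma 2: if the bifurcation parameter stays in `[c_f, C_f]`, the motor power
stays above `√c_f`. -/
theorem stmt3 (cf Cf : ℝ) (hcf : 0 < cf) (hcfCf : cf ≤ Cf) (a F P : ℝ → ℝ)
    (ha_cont : ContinuousOn a (Set.Ici (0:ℝ)))
    (hF_cont : ContinuousOn F (Set.Ici (0:ℝ)))
    (ha_pos : ∀ t ≥ (0:ℝ), 0 < a t)
    (hF_lb : ∀ t ≥ (0:ℝ), cf ≤ F t)
    (hF_ub : ∀ t ≥ (0:ℝ), F t ≤ Cf)
    (hP : ∀ t ≥ (0:ℝ), HasDerivAt P (a t * (F t * P t - (P t)^3)) t)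
    (hP0 : Real.sqrt cf ≤ P 0) :
    ∀ t ≥ (0:ℝ), Real.sqrt cf ≤ P t := by
  have hsq : 0 < Real.sqrt cf := Real.sqrt_pos.mpr hcf
  -- continuity of P on any closed subinterval of [0,∞)
  have hPc : ∀ s r : ℝ, 0 ≤ s → ContinuousOn P (Set.Icc s r) := by
    intro s r hs x hx
    exact ((hP x (hs.trans hx.1)).differentiableAt.continuousAt).continuousWithinAt
  intro t ht
  by_contra hlt
  push_neg at hlt
  set S : Set ℝ := {x | x ∈ Set.Icc (0:ℝ) t ∧ Real.sqrt cf ≤ P x} with hSdef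
  have hS_eq : S = Set.Icc (0:ℝ) t ∩ P ⁻¹' Set.Ici (Real.sqrt cf) := rfl
  have hS_closed : IsClosed S := by
    rw [hS_eq]
    exact ContinuousOn.preimage_isClosed_of_isClosed (hPc 0 t le_rfl)
      isClosed_Icc isClosed_Ici
  have hS_compact : IsCompact S :=
    isCompact_Icc.of_isClosed_subset hS_closed (fun x hx => hx.1)
  have hne : S.Nonempty := ⟨0, ⟨le_rfl, ht⟩, hP0⟩
  obtain ⟨hsmem1, hsmem2⟩ := hS_compact.sSup_mem hne
  set s := sSup S with hsdef
  have hs0 : 0 ≤ s := hsmem1.1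
  have hst : s ≤ t := hsmem1.2
  have hst' : s < t := by
    rcases lt_or_eq_of_le hst with h | h
    · exact h
    · exact absurd (h ▸ hsmem2) (not_le.mpr hlt)
  have hbdd : BddAbove S := hS_compact.bddAbove
  have hupper : ∀ x, s < x → x ≤ t → P x < Real.sqrt cf := by
    intro x hx1 hx2
    by_contra h
    push_neg at h
    exact absurd (le_csSup hbdd ⟨⟨hs0.trans hx1.le, hx2⟩, h⟩) (not_le.mpr hx1)
  -- key auxiliary: if P is positive on (s,b], then P b ≥ √cf by monotonicity
  have haux : ∀ b, s ≤ b → b ≤ t → (∀ x ∈ Set.Ioo s b, 0 < P x) →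
      Real.sqrt cf ≤ P b := by
    intro b hsb hbt hposb
    have hmono : MonotoneOn P (Set.Icc s b) := by
      apply monotoneOn_of_deriv_nonneg (convex_Icc s b)
        ((hPc s b hs0).mono Set.Subset.rfl)
      · intro x hx
        rw [interior_Icc] at hx
        exact ((hP x (hs0.trans hx.1.le)).differentiableAt.differentiableWithinAt)
      · intro x hx
        rw [interior_Icc] at hx
        have hx0 : (0:ℝ) ≤ x := hs0.trans hx.1.le
        rw [(hP x hx0).deriv]
        have hPx : 0 < P x := hposb x hx
        have hPxlt : P x < Real.sqrt cf := hupper x hx.1 (hx.2.le.trans hbt)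
        have hsqle : (P x)^2 ≤ cf := by
          have := pow_le_pow_left₀ hPx.le hPxlt.le 2
          rwa [Real.sq_sqrt hcf.le] at this
        have hF : (P x)^2 ≤ F x := hsqle.trans (hF_lb x hx0)
        have : (0:ℝ) ≤ F x * P x - (P x)^3 := by nlinarith
        exact mul_nonneg (ha_pos x hx0).le this
    calc Real.sqrt cf ≤ P s := hsmem2
      _ ≤ P b := hmono ⟨le_rfl, hsb⟩ ⟨hsb, le_rfl⟩ hsb
  -- positivity of P on (s, t]
  have hpos : ∀ x ∈ Set.Ioo s t, 0 < P x := by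
    by_contra h
    push_neg at h
    obtain ⟨x, hx, hPx⟩ := h
    set B : Set ℝ := {y | y ∈ Set.Icc s t ∧ P y ≤ 0} with hBdef
    have hB_eq : B = Set.Icc s t ∩ P ⁻¹' Set.Iic 0 := rfl
    have hB_closed : IsClosed B := by
      rw [hB_eq]
      exact ContinuousOn.preimage_isClosed_of_isClosed (hPc s t hs0)
        isClosed_Icc isClosed_Iic
    have hB_compact : IsCompact B :=
      isCompact_Icc.of_isClosed_subset hB_closed (fun y hy => hy.1)
    have hBne : B.Nonempty := ⟨x, ⟨hx.1.le, hx.2.le⟩, hPx⟩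
    obtain ⟨hbmem1, hbmem2⟩ := hB_compact.sInf_mem hBne
    set b := sInf B with hbdef
    have hsb : s ≤ b := hbmem1.1
    have hbt : b ≤ t := hbmem1.2
    have hposb : ∀ y ∈ Set.Ioo s b, 0 < P y := by
      intro y hy
      by_contra hPy
      push_neg at hPy
      have : y ∈ B := ⟨⟨hy.1.le, hy.2.le.trans hbt⟩, hPy⟩
      exact absurd (csInf_le hB_compact.bddBelow this) (not_le.mpr hy.2)
    have := haux b hsb hbt hposb
    linarith
  have := haux t hst'.le le_rfl hpos
  linarith
end

section
/- Let C_f ≥ c_f > 0 and ζ > 0. Let a : [0,∞) → ℝ be continuous with a(t) ≥ ζ for all t ≥ 0, let F : [0,∞) → ℝ be continuously differentiable with c_f ≤ F(t) ≤ C_f for all t ≥ 0, and let P : [0,∞) → ℝ be differentiable with P'(t) = a(t)·(F(t)·P(t) − P(t)³) for all t ≥ 0 and √c_f ≤ P(0) ≤ √C_f. Then √c_f ≤ P(t) ≤ √C_f for all t ≥ 0, and for all t ≥ 0: |P(t) − √F(t)| ≤ |P(0) − √F(0)|·e^{−2ζc_f t} + √( (1/(2ζc_f))·√(C_f/c_f)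 · sup_{τ∈[0,t]} |F'(τ)| ). -/
set_option maxHeartbeats 1000000

open Set Real

lemma my_barrier (y y' : ℝ → ℝ) (hd : ∀ τ ≥ (0:ℝ), HasDerivAt y (y' τ) τ)
    (ε : ℝ) (hε : 0 < ε)
    (hsign : ∀ τ ≥ (0:ℝ), 0 ≤ y τ → y τ ≤ ε → y' τ ≤ 0)
    (h0 : y 0 ≤ 0) : ∀ t ≥ (0:ℝ), y t ≤ 0 := by
  intro t ht
  by_contra hpos
  push_neg at hpos
  have hyc : ContinuousOn y (Ici (0:ℝ)) := fun τ hτ =>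
    ((hd τ hτ).continuousAt).continuousWithinAt
  set S : Set ℝ := Icc 0 t ∩ y ⁻¹' Iic 0 with hS
  have hScl : IsClosed S :=
    (hyc.mono Icc_subset_Ici_self).preimage_isClosed_of_isClosed isClosed_Icc isClosed_Iic
  have hSne : S.Nonempty := ⟨0, ⟨le_refl 0, ht⟩, h0⟩
  have hSbdd : BddAbove S := ⟨t, fun x hx => hx.1.2⟩
  set s := sSup S with hs_def
  have hsS : s ∈ S := hScl.csSup_mem hSne hSbdd
  have hs0 : 0 ≤ s := hsS.1.1
  have hst : s ≤ t := hsS.1.2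
  have hys : y s ≤ 0 := hsS.2
  have hslt : s < t := by
    rcases lt_or_eq_of_le hst with h | h
    · exact h
    · exact absurd (h ▸ hys) (not_le.2 hpos)
  have hIocpos : ∀ τ ∈ Ioc s t, 0 < y τ := by
    intro τ hτ
    by_contra hc
    push_neg at hc
    have : τ ∈ S := ⟨⟨le_trans hs0 hτ.1.le, hτ.2⟩, hc⟩
    exact absurd (le_csSup hSbdd this) (not_le.2 hτ.1)
  set ε' := min ε (y t) with hε'_def
  have hε' : 0 < ε' := lt_min hε hpos
  have hε'le : ε' ≤ ε := min_le_left _ _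
  set T : Set ℝ := Icc s t ∩ y ⁻¹' Ici ε' with hT
  have hTcl : IsClosed T := by
    refine (hyc.mono ?_).preimage_isClosed_of_isClosed isClosed_Icc isClosed_Ici
    exact fun x hx => le_trans hs0 hx.1
  have hTne : T.Nonempty := ⟨t, ⟨hst, le_refl t⟩, mem_preimage.2 (min_le_right ε (y t))⟩
  have hTbdd : BddBelow T := ⟨s, fun x hx => hx.1.1⟩
  set t₁ := sInf T with ht₁_def
  have ht₁T : t₁ ∈ T := hTcl.csInf_mem hTne hTbdd
  have hst₁ : s < t₁ := by
    rcases lt_or_eq_of_le ht₁T.1.1 with h | h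
    · exact h
    · exfalso
      have h2 : ε' ≤ y t₁ := mem_preimage.1 ht₁T.2
      rw [← h] at h2; linarith
  have hlt : ∀ τ ∈ Ico s t₁, y τ < ε' := by
    intro τ hτ
    by_contra hc
    push_neg at hc
    have : τ ∈ T := ⟨⟨hτ.1, le_trans hτ.2.le ht₁T.1.2⟩, hc⟩
    exact absurd (csInf_le hTbdd this) (not_le.2 hτ.2)
  have hanti : AntitoneOn y (Icc s t₁) := by
    apply antitoneOn_of_deriv_nonpos (convex_Icc s t₁)
    · exact hyc.mono (fun x hx => le_trans hs0 hx.1)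
    · rw [interior_Icc]
      intro τ hτ
      exact ((hd τ (le_trans hs0 hτ.1.le)).differentiableAt).differentiableWithinAt
    · rw [interior_Icc]
      intro τ hτ
      have hτ0 : (0:ℝ) ≤ τ := le_trans hs0 hτ.1.le
      rw [(hd τ hτ0).deriv]
      refine hsign τ hτ0 ?_ ?_
      · exact (hIocpos τ ⟨hτ.1, le_trans hτ.2.le ht₁T.1.2⟩).le
      · exact le_trans (hlt τ ⟨hτ.1.le, hτ.2⟩).le hε'le
  have : y t₁ ≤ y s := hanti ⟨le_refl s, hst₁.le⟩ ⟨hst₁.le, le_refl t₁⟩ hst₁.le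
  have h2 : ε' ≤ y t₁ := mem_preimage.1 ht₁T.2
  linarith

/-- The estimate (ISS P_M_out) of the paper's Theorem for p = 2, with explicit
constants β = 2ζc_f, C₁-C₂ combined into the explicit square-root bound. -/
theorem stmt4 (cf Cf ζ : ℝ) (hcf : 0 < cf) (hcfCf : cf ≤ Cf) (hζ : 0 < ζ)
    (a F F' P : ℝ → ℝ)
    (ha_cont : ContinuousOn a (Set.Ici (0:ℝ)))
    (ha_lb : ∀ t ≥ (0:ℝ), ζ ≤ a t)
    (hF_deriv : ∀ t ≥ (0:ℝ), HasDerivAt F (F' t) t)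
    (hF'_cont : ContinuousOn F' (Set.Ici (0:ℝ)))
    (hF_lb : ∀ t ≥ (0:ℝ), cf ≤ F t)
    (hF_ub : ∀ t ≥ (0:ℝ), F t ≤ Cf)
    (hP : ∀ t ≥ (0:ℝ), HasDerivAt P (a t * (F t * P t - (P t)^3)) t)
    (hP0_lb : Real.sqrt cf ≤ P 0) (hP0_ub : P 0 ≤ Real.sqrt Cf) :
    ∀ t ≥ (0:ℝ),
      (Real.sqrt cf ≤ P t ∧ P t ≤ Real.sqrt Cf) ∧
      |P t - Real.sqrt (F t)| ≤
        |P 0 - Real.sqrt (F 0)| * Real.exp (-(2 * ζ * cf) * t)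
        + Real.sqrt ((1 / (2 * ζ * cf)) * Real.sqrt (Cf / cf)
            * sSup ((fun τ => |F' τ|) '' Set.Icc 0 t)) := by
  have hq : 0 < Real.sqrt cf := Real.sqrt_pos.2 hcf
  have hqCf : Real.sqrt cf ≤ Real.sqrt Cf := Real.sqrt_le_sqrt hcfCf
  have hq2 : Real.sqrt cf ^ 2 = cf := Real.sq_sqrt hcf.le
  have hQ2 : Real.sqrt Cf ^ 2 = Cf := Real.sq_sqrt (hcf.le.trans hcfCf)
  -- lower invariance
  have hlow : ∀ t ≥ (0:ℝ), Real.sqrt cf ≤ P t := by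
    have := my_barrier (fun τ => Real.sqrt cf - P τ)
      (fun τ => -(a τ * (F τ * P τ - (P τ)^3)))
      (fun τ hτ => (hP τ hτ).const_sub (Real.sqrt cf))
      (Real.sqrt cf / 2) (by positivity)
      (fun τ hτ h1 h2 => by
        have hPl : Real.sqrt cf / 2 ≤ P τ := by linarith
        have hPu : P τ ≤ Real.sqrt cf := by linarith
        have hPpos : 0 < P τ := by linarith
        have hP2 : P τ ^ 2 ≤ cf := by nlinarith
        have hFτ : cf ≤ F τ := hF_lb τ hτ
        have haτ : ζ ≤ a τ := ha_lb τ hτ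
        have h5 : 0 ≤ F τ * P τ - P τ ^ 3 := by nlinarith
        have : 0 ≤ a τ * (F τ * P τ - P τ ^ 3) :=
          mul_nonneg (by linarith) h5
        linarith)
      (by linarith)
    intro t ht
    have := this t ht
    linarith
  -- upper invariance
  have hup : ∀ t ≥ (0:ℝ), P t ≤ Real.sqrt Cf := by
    have := my_barrier (fun τ => P τ - Real.sqrt Cf)
      (fun τ => a τ * (F τ * P τ - (P τ)^3))
      (fun τ hτ => (hP τ hτ).sub_const (Real.sqrt Cf))
      1 one_pos
      (fun τ hτ h1 h2 => by
        have hPl : Real.sqrt Cf ≤ P τ := by linarith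
        have hPpos : 0 < P τ := lt_of_lt_of_le (lt_of_lt_of_le hq hqCf) hPl
        have hP2 : Cf ≤ P τ ^ 2 := by nlinarith
        have hFτ : F τ ≤ Cf := hF_ub τ hτ
        have haτ : ζ ≤ a τ := ha_lb τ hτ
        have h5 : F τ * P τ - P τ ^ 3 ≤ 0 := by nlinarith
        exact mul_nonpos_of_nonneg_of_nonpos (by linarith) h5)
      (by linarith)
    intro t ht
    have := this t ht
    linarith
  -- auxiliary: sqrt of a sum
  have sqrt_add_le : ∀ x y : ℝ, 0 ≤ x → 0 ≤ y →
      Real.sqrt (x + y) ≤ Real.sqrt x + Real.sqrt y := by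
    intro x y hx hy
    rw [← Real.sqrt_sq (by positivity : (0:ℝ) ≤ Real.sqrt x + Real.sqrt y)]
    apply Real.sqrt_le_sqrt
    nlinarith [Real.sq_sqrt hx, Real.sq_sqrt hy, Real.sqrt_nonneg x, Real.sqrt_nonneg y,
      mul_nonneg (Real.sqrt_nonneg x) (Real.sqrt_nonneg y)]
  intro t ht
  refine ⟨⟨hlow t ht, hup t ht⟩, ?_⟩
  set b := 2 * ζ * cf with hb_def
  have hb : 0 < b := by positivity
  set M := sSup ((fun τ => |F' τ|) '' Icc 0 t) with hM_def
  have hMbdd : BddAbove ((fun τ => |F' τ|) '' Icc 0 t) :=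
    (isCompact_Icc.image_of_continuousOn
      ((hF'_cont.mono Icc_subset_Ici_self).abs)).bddAbove
  have hM0 : 0 ≤ M :=
    le_trans (abs_nonneg (F' 0)) (le_csSup hMbdd ⟨0, ⟨le_refl 0, ht⟩, rfl⟩)
  have hMle : ∀ τ ∈ Icc (0:ℝ) t, |F' τ| ≤ M := fun τ hτ => le_csSup hMbdd ⟨τ, hτ, rfl⟩
  set K := Real.sqrt (Cf / cf) * M with hK_def
  have hK0 : 0 ≤ K := mul_nonneg (Real.sqrt_nonneg _) hM0
  have hKb0 : 0 ≤ K / (2 * b) := by positivity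
  have hE : ∀ τ ≥ (0:ℝ), HasDerivAt (fun x => P x - Real.sqrt (F x))
      (a τ * (F τ * P τ - (P τ)^3) - F' τ / (2 * Real.sqrt (F τ))) τ := by
    intro τ hτ
    exact (hP τ hτ).sub ((hF_deriv τ hτ).sqrt (ne_of_gt (lt_of_lt_of_le hcf (hF_lb τ hτ))))
  set g : ℝ → ℝ := fun τ =>
    ((P τ - Real.sqrt (F τ))^2 - K / (2 * b)) * Real.exp (2 * b * τ) with hg_def
  have hgd : ∀ τ ≥ (0:ℝ), HasDerivAt g
      ((2 * (P τ - Real.sqrt (F τ)) ^ 1 *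
          (a τ * (F τ * P τ - (P τ)^3) - F' τ / (2 * Real.sqrt (F τ)))) *
        Real.exp (2 * b * τ) +
        ((P τ - Real.sqrt (F τ))^2 - K / (2 * b)) * (Real.exp (2 * b * τ) * (2 * b * 1))) τ := by
    intro τ hτ
    have h1 := (((hE τ hτ).pow 2).sub_const (K / (2 * b))).mul
      (((hasDerivAt_id τ).const_mul (2 * b)).exp)
    simpa [hg_def, Pi.mul_def] using h1
  -- derivative nonpositive on [0, t]
  have hderiv_le : ∀ τ, 0 ≤ τ → τ ≤ t →
      (2 * (P τ - Real.sqrt (F τ)) ^ 1 *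
          (a τ * (F τ * P τ - (P τ)^3) - F' τ / (2 * Real.sqrt (F τ)))) *
        Real.exp (2 * b * τ) +
        ((P τ - Real.sqrt (F τ))^2 - K / (2 * b)) * (Real.exp (2 * b * τ) * (2 * b * 1)) ≤ 0 := by
    intro τ hτ0 hτt
    set s := Real.sqrt (F τ) with hs_def
    set e := P τ - s with he_def
    have hspos : 0 < s := lt_of_lt_of_le hq (Real.sqrt_le_sqrt (hF_lb τ hτ0))
    have hsl : Real.sqrt cf ≤ s := Real.sqrt_le_sqrt (hF_lb τ hτ0)
    have hsu : s ≤ Real.sqrt Cf := Real.sqrt_le_sqrt (hF_ub τ hτ0)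
    have hs2 : s ^ 2 = F τ := Real.sq_sqrt (le_trans hcf.le (hF_lb τ hτ0))
    have hPl : Real.sqrt cf ≤ P τ := hlow τ hτ0
    have hPu : P τ ≤ Real.sqrt Cf := hup τ hτ0
    have haτ : ζ ≤ a τ := ha_lb τ hτ0
    have hsne : s ≠ 0 := ne_of_gt hspos
    set d := a τ * (F τ * P τ - (P τ)^3) - F' τ / (2 * s) with hd_def
    clear_value s e d
    have hd_eq : 2 * e * d = -(2 * a τ * P τ * (P τ + s) * e^2) - e * F' τ / s := by
      rw [hd_def, he_def, ← hs2]
      field_simp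
      ring
    have h1 : 2 * b - 2 * a τ * P τ * (P τ + s) ≤ 0 := by
      have hPpos : 0 < P τ := lt_of_lt_of_le hq hPl
      nlinarith [mul_le_mul haτ (mul_le_mul hPl (by linarith : Real.sqrt cf + Real.sqrt cf ≤ P τ + s) (by positivity) hPpos.le) (by positivity) (le_trans hζ.le haτ)]
    have hEb : |e| ≤ Real.sqrt Cf := abs_le.2 ⟨by rw [he_def]; linarith, by rw [he_def]; linarith⟩
    have h2 : -(e * F' τ / s) ≤ K := by
      have habs : |e * F' τ / s| ≤ Real.sqrt Cf * M / Real.sqrt cf := by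
        rw [abs_div, abs_mul, abs_of_pos hspos]
        exact div_le_div₀ (mul_nonneg (Real.sqrt_nonneg _) hM0)
          (mul_le_mul hEb (hMle τ ⟨hτ0, hτt⟩) (abs_nonneg _) (Real.sqrt_nonneg _)) hq hsl
      have hKeq : Real.sqrt Cf * M / Real.sqrt cf = K := by
        rw [hK_def, Real.sqrt_div (le_trans hcf.le hcfCf) cf]
        ring
      calc -(e * F' τ / s) ≤ |e * F' τ / s| := neg_le_abs _
        _ ≤ Real.sqrt Cf * M / Real.sqrt cf := habs
        _ = K := hKeq
    have hbrack : 2 * e * d + 2 * b * e^2 - K ≤ 0 := by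
      rw [hd_eq]
      have h1' : 2 * b * e^2 - 2 * a τ * P τ * (P τ + s) * e^2 ≤ 0 := by
        nlinarith [mul_nonpos_of_nonpos_of_nonneg h1 (sq_nonneg e)]
      linarith
    have hkey : (2 * e ^ 1 * d) * Real.exp (2 * b * τ) +
        (e^2 - K / (2 * b)) * (Real.exp (2 * b * τ) * (2 * b * 1)) =
        (2 * e * d + 2 * b * e^2 - K) * Real.exp (2 * b * τ) := by
      have h6 : K / (2 * b) * (2 * b) = K := div_mul_cancel₀ K (by positivity)
      calc (2 * e ^ 1 * d) * Real.exp (2 * b * τ) +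
          (e^2 - K / (2 * b)) * (Real.exp (2 * b * τ) * (2 * b * 1)) =
          (2 * e * d + 2 * b * e^2 - K / (2 * b) * (2 * b)) * Real.exp (2 * b * τ) := by ring
        _ = (2 * e * d + 2 * b * e^2 - K) * Real.exp (2 * b * τ) := by rw [h6]
    rw [hkey]
    exact mul_nonpos_of_nonpos_of_nonneg hbrack (Real.exp_nonneg _)
  have hanti : AntitoneOn g (Icc 0 t) := by
    apply antitoneOn_of_deriv_nonpos (convex_Icc 0 t)
    · exact fun τ hτ => (hgd τ hτ.1).continuousAt.continuousWithinAt
    · rw [interior_Icc]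
      exact fun τ hτ => ((hgd τ hτ.1.le).differentiableAt).differentiableWithinAt
    · rw [interior_Icc]
      intro τ hτ
      rw [(hgd τ hτ.1.le).deriv]
      exact hderiv_le τ hτ.1.le hτ.2.le
  have hgt : g t ≤ g 0 := hanti ⟨le_refl 0, ht⟩ ⟨ht, le_refl t⟩ ht
  have hg0 : g 0 = (P 0 - Real.sqrt (F 0))^2 - K / (2 * b) := by
    simp [hg_def]
  have hEpos : (0:ℝ) < Real.exp (2 * b * t) := Real.exp_pos _
  have h7 : (P t - Real.sqrt (F t))^2 ≤
      (P 0 - Real.sqrt (F 0))^2 * Real.exp (-(2 * b * t)) + K / (2 * b) := by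
    have hstep : (P t - Real.sqrt (F t))^2 - K / (2 * b) ≤
        ((P 0 - Real.sqrt (F 0))^2 - K / (2 * b)) * Real.exp (-(2 * b * t)) := by
      rw [Real.exp_neg, ← div_eq_mul_inv, le_div_iff₀ hEpos]
      rw [hg0] at hgt
      exact hgt
    have hexpand : ((P 0 - Real.sqrt (F 0))^2 - K / (2 * b)) * Real.exp (-(2 * b * t)) =
        (P 0 - Real.sqrt (F 0))^2 * Real.exp (-(2 * b * t)) -
        K / (2 * b) * Real.exp (-(2 * b * t)) := by ring
    have hpos : 0 ≤ K / (2 * b) * Real.exp (-(2 * b * t)) :=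
      mul_nonneg hKb0 (Real.exp_nonneg _)
    rw [hexpand] at hstep
    linarith
  have h8 : |P t - Real.sqrt (F t)| ≤
      Real.sqrt ((P 0 - Real.sqrt (F 0))^2 * Real.exp (-(2 * b * t)) + K / (2 * b)) := by
    rw [← Real.sqrt_sq_eq_abs]
    exact Real.sqrt_le_sqrt h7
  have hX0 : 0 ≤ (P 0 - Real.sqrt (F 0))^2 * Real.exp (-(2 * b * t)) := by positivity
  have h9 := sqrt_add_le _ _ hX0 hKb0
  have hsqX : Real.sqrt ((P 0 - Real.sqrt (F 0))^2 * Real.exp (-(2 * b * t))) =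
      |P 0 - Real.sqrt (F 0)| * Real.exp (-(b * t)) := by
    rw [Real.sqrt_mul (sq_nonneg _), Real.sqrt_sq_eq_abs]
    congr 1
    rw [show -(2 * b * t) = -(b * t) + -(b * t) by ring, Real.exp_add]
    exact Real.sqrt_mul_self (Real.exp_nonneg _)
  have hsqK : Real.sqrt (K / (2 * b)) ≤ Real.sqrt (1 / b * Real.sqrt (Cf / cf) * M) := by
    apply Real.sqrt_le_sqrt
    have : 1 / b * Real.sqrt (Cf / cf) * M = K / b := by rw [hK_def]; ring
    rw [this, div_le_div_iff₀ (by positivity) hb]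
    nlinarith [hK0, hb]
  have hfinal : |P t - Real.sqrt (F t)| ≤
      |P 0 - Real.sqrt (F 0)| * Real.exp (-(b * t)) +
      Real.sqrt (1 / b * Real.sqrt (Cf / cf) * M) := by
    calc |P t - Real.sqrt (F t)|
        ≤ Real.sqrt ((P 0 - Real.sqrt (F 0))^2 * Real.exp (-(2 * b * t)) + K / (2 * b)) := h8
      _ ≤ Real.sqrt ((P 0 - Real.sqrt (F 0))^2 * Real.exp (-(2 * b * t))) +
          Real.sqrt (K / (2 * b)) := h9
      _ ≤ |P 0 - Real.sqrt (F 0)| * Real.exp (-(b * t)) +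
          Real.sqrt (1 / b * Real.sqrt (Cf / cf) * M) := by
          rw [hsqX]; exact add_le_add_right hsqK _
  convert hfinal using 3 <;> ring
end

section
/- Let C_f ≥ c_f > 0 and ζ > 0. Let a : [0,∞) → ℝ be continuous with a(t) ≥ ζ for all t ≥ 0, let F : [0,∞) → ℝ be continuously differentiable with c_f ≤ F(t) ≤ C_f for all t ≥ 0, and let P : [0,∞) → ℝ be differentiable with P'(t) = a(t)·(F(t)·P(t) − P(t)³) for all t ≥ 0 and √c_f ≤ P(0) ≤ √C_f. Then there exist constants β > 0 and C > 0, depending only on ζ, c_f and C_f, such that for all t ≥ 0: |P(t) − √F(t)| ≤ |P(0) − √F(0)|·e^{−βt} + C·sup_{τ∈[0,t]} |F'(τ)|. -/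
open Set

private lemma aux_le_of_forall_pos {x y : ℝ} (h : ∀ ε > (0:ℝ), x ≤ y + ε) : x ≤ y := by
  by_contra hxy
  push_neg at hxy
  have := h ((x - y)/2) (by linarith)
  linarith

set_option maxHeartbeats 1000000 in
/-- The estimate (ISS P_M_out) of the paper's Theorem for p = 1: the disturbance
enters with exponent 1, with constants depending only on ζ, c_f, C_f. -/
theorem stmt5 (cf Cf ζ : ℝ) (hcf : 0 < cf) (hcfCf : cf ≤ Cf) (hζ : 0 < ζ) :
    ∃ β > (0:ℝ), ∃ C > (0:ℝ),
      ∀ a F F' P : ℝ → ℝ,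
        ContinuousOn a (Set.Ici (0:ℝ)) →
        (∀ t ≥ (0:ℝ), ζ ≤ a t) →
        (∀ t ≥ (0:ℝ), HasDerivAt F (F' t) t) →
        ContinuousOn F' (Set.Ici (0:ℝ)) →
        (∀ t ≥ (0:ℝ), cf ≤ F t) →
        (∀ t ≥ (0:ℝ), F t ≤ Cf) →
        (∀ t ≥ (0:ℝ), HasDerivAt P (a t * (F t * P t - (P t)^3)) t) →
        Real.sqrt cf ≤ P 0 → P 0 ≤ Real.sqrt Cf →
        ∀ t ≥ (0:ℝ),
          |P t - Real.sqrt (F t)| ≤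
            |P 0 - Real.sqrt (F 0)| * Real.exp (-β * t)
            + C * sSup ((fun τ => |F' τ|) '' Set.Icc 0 t) := by
  have hCf : 0 < Cf := lt_of_lt_of_le hcf hcfCf
  have hscf : 0 < Real.sqrt cf := Real.sqrt_pos.mpr hcf
  have hcfsq : Real.sqrt cf ^ 2 = cf := Real.sq_sqrt hcf.le
  have hCfsq : Real.sqrt Cf ^ 2 = Cf := Real.sq_sqrt hCf.le
  have hsCf : 0 < Real.sqrt Cf := Real.sqrt_pos.mpr hCf
  set β := ζ * cf with hβdef
  have hβ : 0 < β := mul_pos hζ hcf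
  refine ⟨β, hβ, 1 / (2 * Real.sqrt cf * β), by positivity, ?_⟩
  intro a F F' P hacont haζ hFd hF'c hFcf hFCf hPd hP0l hP0u T hT
  have hPcont : ContinuousOn P (Icc (0:ℝ) T) := fun x hx =>
    ((hPd x hx.1).continuousAt).continuousWithinAt
  -- Step A: invariance of [√cf, √Cf]
  have hupper : ∀ s ∈ Icc (0:ℝ) T, P s ≤ Real.sqrt Cf := by
    intro s hs
    apply aux_le_of_forall_pos
    intro ε hε
    have h1s : (0:ℝ) < 1 + s := by linarith [hs.1]
    set ε' := ε / (1 + s) with hε'def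
    have hε' : 0 < ε' := div_pos hε h1s
    have key := image_le_of_deriv_right_lt_deriv_boundary (f := P)
      (f' := fun τ => a τ * (F τ * P τ - (P τ)^3)) (a := 0) (b := T)
      (B := fun τ => Real.sqrt Cf + ε' * (1 + τ)) (B' := fun _ => ε')
      hPcont (fun x hx => (hPd x hx.1).hasDerivWithinAt)
      (by show P 0 ≤ Real.sqrt Cf + ε' * (1 + 0); nlinarith)
      (fun x => by
        simpa using (((hasDerivAt_id x).const_add (1:ℝ)).const_mul ε').const_add (Real.sqrt Cf))
      ?_ hs
    · have hes : ε' * (1 + s) = ε := div_mul_cancel₀ ε h1s.ne'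
      have key2 : P s ≤ Real.sqrt Cf + ε' * (1 + s) := key
      nlinarith [key2]
    · intro x hx heq
      have heq2 : P x = Real.sqrt Cf + ε' * (1 + x) := heq
      have hx0 : 0 ≤ x := hx.1
      have hax := haζ x hx0
      have hFle := hFCf x hx0
      have hPgt : Real.sqrt Cf < P x := by nlinarith [heq2]
      have hPpos : 0 < P x := lt_trans hsCf hPgt
      have hP2 : Cf < P x ^ 2 := by nlinarith
      have hneg : P x * (F x - P x ^ 2) < 0 :=
        mul_neg_of_pos_of_neg hPpos (by linarith)
      have : a x * (F x * P x - (P x)^3) < 0 := by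
        have := mul_neg_of_pos_of_neg (lt_of_lt_of_le hζ hax) hneg
        nlinarith
      show a x * (F x * P x - (P x)^3) < ε'
      exact lt_trans this hε'
  have hlower : ∀ s ∈ Icc (0:ℝ) T, Real.sqrt cf ≤ P s := by
    intro s hs
    apply aux_le_of_forall_pos
    intro ε hε
    have h1T : (0:ℝ) < 1 + T := by linarith
    set ε' := min (ε / (1 + T)) (Real.sqrt cf / (2 * (1 + T))) with hε'def
    have hε'pos : 0 < ε' := lt_min (div_pos hε h1T) (by positivity)
    have hε'T : ε' * (1 + T) < Real.sqrt cf := by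
      have h2 := mul_le_mul_of_nonneg_right
        (min_le_right (ε/(1+T)) (Real.sqrt cf/(2*(1+T)))) h1T.le
      have h3 : Real.sqrt cf/(2*(1+T)) * (1+T) = Real.sqrt cf/2 := by
        field_simp
      rw [hε'def]
      nlinarith
    have key := image_le_of_deriv_right_lt_deriv_boundary (f := fun τ => -P τ)
      (f' := fun τ => -(a τ * (F τ * P τ - (P τ)^3))) (a := 0) (b := T)
      (B := fun τ => -(Real.sqrt cf - ε' * (1 + τ))) (B' := fun _ => ε')
      hPcont.neg (fun x hx => ((hPd x hx.1).hasDerivWithinAt).neg)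
      (by show -P 0 ≤ -(Real.sqrt cf - ε' * (1 + 0)); nlinarith)
      (fun x => by
        simpa [Pi.neg_def] using ((((hasDerivAt_id x).const_add (1:ℝ)).const_mul ε').const_sub
          (Real.sqrt cf)).neg)
      ?_ hs
    · have key2 : -P s ≤ -(Real.sqrt cf - ε' * (1 + s)) := key
      have h4 := mul_le_mul_of_nonneg_right
        (min_le_left (ε/(1+T)) (Real.sqrt cf/(2*(1+T)))) h1T.le
      have h5 : (ε/(1+T)) * (1+T) = ε := div_mul_cancel₀ ε h1T.ne'
      have h6 : ε' * (1 + s) ≤ ε' * (1 + T) :=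
        mul_le_mul_of_nonneg_left (by linarith [hs.2]) hε'pos.le
      nlinarith [key2]
    · intro x hx heq
      have heq2 : -P x = -(Real.sqrt cf - ε' * (1 + x)) := heq
      have hx0 : 0 ≤ x := hx.1
      have hPx : P x = Real.sqrt cf - ε' * (1 + x) := by linarith [heq2]
      have h1x : ε' * (1 + x) ≤ ε' * (1 + T) :=
        mul_le_mul_of_nonneg_left (by linarith [hx.2]) hε'pos.le
      have hPlt : P x < Real.sqrt cf := by nlinarith
      have hPpos : 0 < P x := by nlinarith
      have hP2 : P x ^ 2 < cf := by nlinarith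
      have hFge := hFcf x hx0
      have hpos : 0 < a x * P x * (F x - P x ^ 2) :=
        mul_pos (mul_pos (lt_of_lt_of_le hζ (haζ x hx0)) hPpos) (by linarith)
      show -(a x * (F x * P x - (P x)^3)) < ε'
      nlinarith
  -- Step B: Grönwall estimate on e = P - √F
  set M := sSup ((fun τ => |F' τ|) '' Icc (0:ℝ) T) with hMdef
  have hF'contIcc : ContinuousOn (fun τ => |F' τ|) (Icc (0:ℝ) T) :=
    (hF'c.mono (fun x hx => hx.1)).abs
  have hbdd : BddAbove ((fun τ => |F' τ|) '' Icc (0:ℝ) T) :=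
    (isCompact_Icc.image_of_continuousOn hF'contIcc).bddAbove
  have hMle : ∀ τ ∈ Icc (0:ℝ) T, |F' τ| ≤ M := fun τ hτ => le_csSup hbdd ⟨τ, hτ, rfl⟩
  have hM0 : 0 ≤ M := le_trans (abs_nonneg _) (hMle 0 ⟨le_refl 0, hT⟩)
  set K := M / (2 * Real.sqrt cf * β) with hKdef
  have hK0 : 0 ≤ K := by positivity
  have hKβ : K * β = M / (2 * Real.sqrt cf) := by
    rw [hKdef]; field_simp
  have hFpos : ∀ τ ≥ (0:ℝ), 0 < F τ := fun τ hτ => lt_of_lt_of_le hcf (hFcf τ hτ)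
  have hed : ∀ τ ≥ (0:ℝ), HasDerivAt (fun u => P u - Real.sqrt (F u))
      (a τ * (F τ * P τ - (P τ)^3) - F' τ / (2 * Real.sqrt (F τ))) τ := fun τ hτ =>
    (hPd τ hτ).sub ((hFd τ hτ).sqrt (hFpos τ hτ).ne')
  have hecont : ContinuousOn (fun u => P u - Real.sqrt (F u)) (Icc (0:ℝ) T) :=
    fun x hx => ((hed x hx.1).continuousAt).continuousWithinAt
  have hexp : ∀ τ : ℝ, HasDerivAt (fun u => Real.exp (-β * u))
      (Real.exp (-β * τ) * (-β)) τ := by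
    intro τ
    simpa using ((hasDerivAt_id τ).const_mul (-β)).exp
  have hE1 : ∀ τ ≥ (0:ℝ), Real.exp (-β * τ) ≤ 1 := by
    intro τ hτ
    apply Real.exp_le_one_iff.mpr
    nlinarith
  set E0 : ℝ := |P 0 - Real.sqrt (F 0)| with hE0def
  have hE0nn : 0 ≤ E0 := abs_nonneg _
  -- core pointwise facts at x ∈ Ico 0 T
  have hcore : ∀ x ∈ Ico (0:ℝ) T,
      2*β ≤ a x * (P x * (P x + Real.sqrt (F x))) ∧
      |F' x / (2 * Real.sqrt (F x))| ≤ M / (2 * Real.sqrt cf) ∧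
      Real.sqrt (F x) ^ 2 = F x := by
    intro x hx
    have hx0 : 0 ≤ x := hx.1
    have hsge : Real.sqrt cf ≤ Real.sqrt (F x) := Real.sqrt_le_sqrt (hFcf x hx0)
    have hs2 : Real.sqrt (F x) ^ 2 = F x := Real.sq_sqrt (hFpos x hx0).le
    have hPge : Real.sqrt cf ≤ P x := hlower x ⟨hx0, hx.2.le⟩
    have hax := haζ x hx0
    refine ⟨?_, ?_, hs2⟩
    · have hPs : 2*cf ≤ P x * (P x + Real.sqrt (F x)) := by
        nlinarith [mul_nonneg (sub_nonneg.2 hPge) (sub_nonneg.2 hsge),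
          mul_nonneg hscf.le (sub_nonneg.2 hPge), mul_nonneg hscf.le (sub_nonneg.2 hsge),
          mul_nonneg (sub_nonneg.2 hPge) (sub_nonneg.2 hPge)]
      have := mul_le_mul hax hPs (by positivity) (le_trans hζ.le hax)
      nlinarith
    · have hspos : 0 < Real.sqrt (F x) := lt_of_lt_of_le hscf hsge
      rw [abs_div, abs_of_pos (by linarith : (0:ℝ) < 2 * Real.sqrt (F x))]
      exact div_le_div₀ hM0 (hMle x ⟨hx0, hx.2.le⟩) (by positivity) (by linarith)
  -- both one-sided Grönwall comparisons, for every δ > 0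
  have hgron : ∀ δ > (0:ℝ), ∀ σ : ℝ, σ = 1 ∨ σ = -1 →
      σ * (P T - Real.sqrt (F T)) ≤
        E0 * Real.exp (-β*T) + K * (1 - Real.exp (-β*T)) + δ := by
    intro δ hδ σ hσ
    have hσd : ∀ τ ≥ (0:ℝ), HasDerivAt (fun u => σ * (P u - Real.sqrt (F u)))
        (σ * (a τ * (F τ * P τ - (P τ)^3) - F' τ / (2 * Real.sqrt (F τ)))) τ :=
      fun τ hτ => (hed τ hτ).const_mul σ
    have key := image_le_of_deriv_right_lt_deriv_boundary
      (f := fun u => σ * (P u - Real.sqrt (F u)))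
      (f' := fun τ => σ * (a τ * (F τ * P τ - (P τ)^3) - F' τ / (2 * Real.sqrt (F τ))))
      (a := 0) (b := T)
      (B := fun τ => E0 * Real.exp (-β*τ) + K * (1 - Real.exp (-β*τ)) + δ)
      (B' := fun τ => E0 * (Real.exp (-β*τ) * (-β)) + K * (-(Real.exp (-β*τ) * (-β))))
      (hecont.const_smul σ) (fun x hx => ((hσd x hx.1).hasDerivWithinAt))
      ?_ (fun x => (((hexp x).const_mul E0).add (((hexp x).const_sub 1).const_mul K)).add_const δ)
      ?_ (right_mem_Icc.mpr hT)
    · exact key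
    · -- initial condition
      simp only [mul_zero, neg_zero, Real.exp_zero, mul_one]
      have h1 := le_abs_self (P 0 - Real.sqrt (F 0))
      have h2 := neg_abs_le (P 0 - Real.sqrt (F 0))
      rcases hσ with h | h <;> rw [h] <;> nlinarith
    · -- the bound at touching points
      intro x hx heq
      have heqb : σ * (P x - Real.sqrt (F x)) =
          E0 * Real.exp (-β*x) + K * (1 - Real.exp (-β*x)) + δ := heq
      obtain ⟨hcoef, habs, hs2⟩ := hcore x hx
      have hx0 : 0 ≤ x := hx.1
      have hEpos : 0 < Real.exp (-β*x) := Real.exp_pos _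
      have hE1x := hE1 x hx0
      have hw : 0 < σ * (P x - Real.sqrt (F x)) := by
        rw [heqb]
        nlinarith [mul_nonneg hE0nn hEpos.le, mul_nonneg hK0 (by linarith : (0:ℝ) ≤ 1 - Real.exp (-β*x))]
      -- rewrite the nonlinear term
      have halg : a x * (F x * P x - (P x)^3)
          = -(a x * (P x * (P x + Real.sqrt (F x)))) * (P x - Real.sqrt (F x)) := by
        linear_combination (-(a x * P x)) * hs2
      have hdd := abs_le.mp habs
      have hfle : σ * (a x * (F x * P x - (P x)^3) - F' x / (2 * Real.sqrt (F x)))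
          ≤ -(2*β) * (σ * (P x - Real.sqrt (F x))) + M / (2 * Real.sqrt cf) := by
        rcases hσ with h | h <;> rw [h] <;> rw [h] at hw <;>
          nlinarith [mul_le_mul_of_nonneg_right hcoef hw.le, halg, hdd.1, hdd.2]
      have hfin : -(2*β) * (σ * (P x - Real.sqrt (F x))) + M / (2 * Real.sqrt cf)
          < E0 * (Real.exp (-β*x) * (-β)) + K * (-(Real.exp (-β*x) * (-β))) := by
        rw [heqb]
        nlinarith [mul_nonneg (mul_nonneg hβ.le hE0nn) hEpos.le,
          mul_nonneg (mul_nonneg hβ.le hK0) (by linarith : (0:ℝ) ≤ 1 - Real.exp (-β*x)),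
          mul_pos hβ hδ, hKβ]
      exact lt_of_le_of_lt hfle hfin
  -- take δ → 0 and combine both sides
  have hside : ∀ σ : ℝ, σ = 1 ∨ σ = -1 →
      σ * (P T - Real.sqrt (F T)) ≤ E0 * Real.exp (-β*T) + K * (1 - Real.exp (-β*T)) := by
    intro σ hσ
    apply aux_le_of_forall_pos
    intro δ hδ
    exact hgron δ hδ σ hσ
  have h1 := hside 1 (Or.inl rfl)
  have h2 := hside (-1) (Or.inr rfl)
  have habs : |P T - Real.sqrt (F T)| ≤ E0 * Real.exp (-β*T) + K * (1 - Real.exp (-β*T)) := by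
    apply abs_le.mpr
    constructor <;> nlinarith
  have hE1T := hE1 T hT
  have hKC : K = 1 / (2 * Real.sqrt cf * β) * M := by rw [hKdef]; ring
  have : K * (1 - Real.exp (-β*T)) ≤ K := by
    nlinarith [mul_nonneg hK0 (Real.exp_pos (-β*T)).le]
  calc |P T - Real.sqrt (F T)| ≤ E0 * Real.exp (-β*T) + K * (1 - Real.exp (-β*T)) := habs
    _ ≤ E0 * Real.exp (-β*T) + K := by linarith
    _ = |P 0 - Real.sqrt (F 0)| * Real.exp (-β*T) + 1 / (2 * Real.sqrt cf * β) * M := by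
        rw [hE0def, hKC]
end

section
/- Let C_f ≥ c_f > 0, ζ > 0 and P_{H,M} > P_{H,m} > 0. Let a : [0,∞) → ℝ be continuous with a(t) ≥ ζ, let F : [0,∞) → ℝ be continuously differentiable with c_f ≤ F(t) ≤ C_f, let P_H : [0,∞) → ℝ be continuous with P_{H,m} ≤ P_H(t) ≤ P_{H,M} for all t ≥ 0, and let P : [0,∞) → ℝ be differentiable with P'(t) = a(t)·(F(t)·P(t) − P(t)³) for all t ≥ 0 and √c_f ≤ P(0) ≤ √C_f. Define m(t) = P_H(t)/(P(t) + P_H(t)) and m*(t) = P_H(t)/(√F(t) + P_H(t)). Then there exist constants β, C₃, C > 0, depending only on ζ, c_f, C_f, P_{H,m}, P_{H,M}, such that for all t ≥ 0: |m(t) − m*(t)| ≤ C₃·|m(0) − m*(0)|·e^{−βt} + C·sup_{τ∈[0,t]} |F'(τ)|. -/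
open Set

set_option maxHeartbeats 1000000

/-- The estimate (ISS m) of the paper's Theorem for p = 1: tracking of the power
ratio m by the reference m* in the cooperative regime. -/
theorem stmt7 (cf Cf ζ PHm PHM : ℝ) (hcf : 0 < cf) (hcfCf : cf ≤ Cf) (hζ : 0 < ζ)
    (hPHm : 0 < PHm) (hPH : PHm < PHM) :
    ∃ β > (0:ℝ), ∃ C₃ > (0:ℝ), ∃ C > (0:ℝ),
      ∀ a F F' PH P : ℝ → ℝ,
        ContinuousOn a (Set.Ici (0:ℝ)) →
        (∀ t ≥ (0:ℝ), ζ ≤ a t) →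
        (∀ t ≥ (0:ℝ), HasDerivAt F (F' t) t) →
        ContinuousOn F' (Set.Ici (0:ℝ)) →
        (∀ t ≥ (0:ℝ), cf ≤ F t) →
        (∀ t ≥ (0:ℝ), F t ≤ Cf) →
        ContinuousOn PH (Set.Ici (0:ℝ)) →
        (∀ t ≥ (0:ℝ), PHm ≤ PH t) →
        (∀ t ≥ (0:ℝ), PH t ≤ PHM) →
        (∀ t ≥ (0:ℝ), HasDerivAt P (a t * (F t * P t - (P t)^3)) t) →
        Real.sqrt cf ≤ P 0 → P 0 ≤ Real.sqrt Cf →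
        ∀ t ≥ (0:ℝ),
          |PH t / (P t + PH t) - PH t / (Real.sqrt (F t) + PH t)| ≤
            C₃ * |PH 0 / (P 0 + PH 0) - PH 0 / (Real.sqrt (F 0) + PH 0)|
              * Real.exp (-β * t)
            + C * sSup ((fun τ => |F' τ|) '' Set.Icc 0 t) := by
  have hsc : (0:ℝ) < Real.sqrt cf := Real.sqrt_pos.2 hcf
  have hCf : (0:ℝ) < Cf := lt_of_lt_of_le hcf hcfCf
  have hscC : Real.sqrt cf ≤ Real.sqrt Cf := Real.sqrt_le_sqrt hcfCf
  have hsC : (0:ℝ) < Real.sqrt Cf := lt_of_lt_of_le hsc hscC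
  have hPHM : (0:ℝ) < PHM := lt_trans hPHm hPH
  set sc := Real.sqrt cf with hsc_def
  set sC := Real.sqrt Cf with hsC_def
  set β := 2 * ζ * cf with hβ_def
  have hβ : (0:ℝ) < β := by positivity
  set L1 := PHM / (sc + PHm)^2 with hL1_def
  set K0 := (sC + PHM)^2 / PHm with hK0_def
  have hL1 : (0:ℝ) < L1 := by positivity
  have hK0 : (0:ℝ) < K0 := by positivity
  refine ⟨β, hβ, L1 * K0, by positivity, L1 / (2 * sc * β), by positivity, ?_⟩
  intro a F F' PH P hac ha hF hF'c hFl hFu hPHc hPHl hPHu hP hP0l hP0u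
  -- Invariance: sqrt cf ≤ P s ≤ sqrt Cf for all s ≥ 0
  have hPcont : ∀ b : ℝ, ContinuousOn P (Icc 0 b) := fun b x hx =>
    (hP x hx.1).continuousAt.continuousWithinAt
  have hPlow : ∀ s ≥ (0:ℝ), sc ≤ P s := by
    intro s hs
    apply le_of_forall_sub_le
    intro ε hε
    set ε' := min ε (sc / 2) with hε'_def
    have hε'0 : 0 < ε' := lt_min hε (by positivity)
    have hε'sc : ε' ≤ sc / 2 := min_le_right _ _
    have key : ∀ ⦃x⦄, x ∈ Icc 0 s → (fun _ : ℝ => sc - ε') x ≤ P x := by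
      refine image_le_of_deriv_right_lt_deriv_boundary'
        (f := fun _ => sc - ε') (f' := fun _ => 0)
        (B := P) (B' := fun x => a x * (F x * P x - (P x)^3))
        continuousOn_const (fun x _ => hasDerivWithinAt_const x _ _)
        (by simpa using (by linarith : sc - ε' ≤ P 0)) (hPcont s)
        (fun x hx => (hP x hx.1).hasDerivWithinAt) ?_
      intro x hx hcontact
      have hax := ha x hx.1
      have hFx := hFl x hx.1
      have hPx : P x = sc - ε' := hcontact.symm
      have hsq : sc ^ 2 = cf := Real.sq_sqrt hcf.le
      have hc0 : 0 < sc - ε' := by linarith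
      have h1 : (sc - ε')^2 < cf := by nlinarith
      have h2 : 0 < F x * P x - (P x)^3 := by
        rw [hPx]; nlinarith
      exact mul_pos (lt_of_lt_of_le hζ hax) h2
    have hkx : sc - ε' ≤ P s := key ⟨hs, le_refl s⟩
    have hle : ε' ≤ ε := min_le_left _ _
    linarith
  have hPup : ∀ s ≥ (0:ℝ), P s ≤ sC := by
    intro s hs
    have : ∀ ε > (0:ℝ), P s ≤ sC + ε := by
      intro ε hε
      have key : ∀ ⦃x⦄, x ∈ Icc 0 s → P x ≤ (fun _ : ℝ => sC + ε) x := by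
        refine image_le_of_deriv_right_lt_deriv_boundary'
          (f := P) (f' := fun x => a x * (F x * P x - (P x)^3))
          (B := fun _ => sC + ε) (B' := fun _ => 0)
          (hPcont s) (fun x hx => (hP x hx.1).hasDerivWithinAt)
          (by simpa using (by linarith : P 0 ≤ sC + ε))
          continuousOn_const (fun x _ => hasDerivWithinAt_const x _ _) ?_
        intro x hx hcontact
        have hax := ha x hx.1
        have hFx := hFu x hx.1
        have hsq : sC ^ 2 = Cf := Real.sq_sqrt hCf.le
        have hc0 : 0 < sC + ε := by linarith
        have hPx : P x = sC + ε := hcontact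
        have h2 : F x * P x - (P x)^3 < 0 := by
          rw [hPx]; nlinarith [mul_pos hsC hε, sq_nonneg ε]
        exact mul_neg_of_pos_of_neg (lt_of_lt_of_le hζ hax) h2
      exact key ⟨hs, le_refl s⟩
    exact le_of_forall_sub_le fun ε hε => by linarith [this ε hε]
  -- setup for the error e = P - sqrt ∘ F
  set e : ℝ → ℝ := fun s => P s - Real.sqrt (F s) with he_def
  have hFpos : ∀ s ≥ (0:ℝ), (0:ℝ) < F s := fun s hs => lt_of_lt_of_le hcf (hFl s hs)
  have hsqF : ∀ s ≥ (0:ℝ), sc ≤ Real.sqrt (F s) := fun s hs =>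
    Real.sqrt_le_sqrt (hFl s hs)
  have hsqFu : ∀ s ≥ (0:ℝ), Real.sqrt (F s) ≤ sC := fun s hs =>
    Real.sqrt_le_sqrt (hFu s hs)
  set E' : ℝ → ℝ := fun s =>
    a s * (F s * P s - (P s)^3) - F' s / (2 * Real.sqrt (F s)) with hE'_def
  have hederiv : ∀ s ≥ (0:ℝ), HasDerivAt e (E' s) s := fun s hs =>
    (hP s hs).sub (((hF s hs).sqrt (ne_of_gt (hFpos s hs))))
  have hecont : ∀ b : ℝ, ContinuousOn e (Icc 0 b) := fun b x hx =>
    (hederiv x hx.1).continuousAt.continuousWithinAt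
  clear_value e E'
  -- main estimate at time t
  intro t ht
  set M := sSup ((fun τ => |F' τ|) '' Icc 0 t) with hM_def
  have hMbdd : BddAbove ((fun τ => |F' τ|) '' Icc 0 t) :=
    (isCompact_Icc.image_of_continuousOn
      ((continuous_abs.comp_continuousOn (hF'c.mono (fun x hx => hx.1))))).bddAbove
  have hMmem : ∀ s ∈ Icc (0:ℝ) t, |F' s| ≤ M := fun s hs =>
    le_csSup hMbdd ⟨s, hs, rfl⟩
  have hM0 : (0:ℝ) ≤ M := le_trans (abs_nonneg _) (hMmem 0 ⟨le_refl 0, ht⟩)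
  set M' := M / (2 * sc) with hM'_def
  have hM'0 : (0:ℝ) ≤ M' := by positivity
  have hdbound : ∀ s ∈ Icc (0:ℝ) t, |F' s| / (2 * Real.sqrt (F s)) ≤ M' := by
    intro s hs
    exact div_le_div₀ hM0 (hMmem s hs) (by linarith) (by linarith [hsqF s hs.1])
  -- Gronwall-type comparison, with δ-perturbation
  have hkey : ∀ δ > (0:ℝ),
      |e t| ≤ |e 0| * Real.exp (-β * t) + (M' + δ) / β := by
    intro δ hδ
    set B : ℝ → ℝ := fun s =>
      |e 0| * Real.exp (-β * s) + ((M' + δ) / β) * (1 - Real.exp (-β * s)) with hB_def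
    set B' : ℝ → ℝ := fun s =>
      (-β * |e 0| + (M' + δ)) * Real.exp (-β * s) with hB'_def
    have hBderiv : ∀ x : ℝ, HasDerivAt B (B' x) x := by
      intro x
      have h1 : HasDerivAt (fun s : ℝ => Real.exp (-β * s)) (-β * Real.exp (-β * x)) x := by
        have := ((hasDerivAt_id x).const_mul (-β)).exp
        simpa [mul_comm] using this
      have h2 := ((h1.const_mul (|e 0|)).add
        (((hasDerivAt_const x (1:ℝ)).sub h1).const_mul ((M' + δ) / β)))
      refine h2.congr_deriv ?_
      simp only [hB'_def]
      field_simp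
      ring
    have hBnonneg : ∀ x ∈ Icc (0:ℝ) t, 0 ≤ B x := by
      intro x hx
      have he1 : Real.exp (-β * x) ≤ 1 := by
        apply Real.exp_le_one_iff.2; nlinarith [hx.1]
      have he0 : (0:ℝ) < Real.exp (-β * x) := Real.exp_pos _
      have h3 : (0:ℝ) ≤ (M' + δ) / β := by positivity
      simp only [hB_def]
      have h4 : (0:ℝ) ≤ 1 - Real.exp (-β * x) := by linarith
      have := abs_nonneg (e 0)
      positivity
    have hBeq : ∀ x : ℝ, B' x = -β * B x + (M' + δ) := by
      intro x
      simp only [hB_def, hB'_def]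
      field_simp
      ring
    clear_value B B'
    -- common contact estimate
    have hcore : ∀ x ∈ Ico (0:ℝ) t, ∀ v : ℝ, v = B x →
        a x * P x * (P x + Real.sqrt (F x)) * v ≥ β * B x := by
      intro x hx v hv
      have hax := ha x hx.1
      have hPl := hPlow x hx.1
      have hql := hsqF x hx.1
      have hBx := hBnonneg x ⟨hx.1, hx.2.le⟩
      have hζa : (0:ℝ) ≤ a x := le_trans hζ.le hax
      have h1 : ζ * sc ≤ a x * P x := mul_le_mul hax hPl hsc.le hζa
      have h2 : (ζ * sc) * (2 * sc) ≤ (a x * P x) * (P x + Real.sqrt (F x)) :=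
        mul_le_mul h1 (by linarith) (by positivity) (mul_nonneg hζa (by linarith))
      have hsq : sc ^ 2 = cf := Real.sq_sqrt hcf.le
      have hk : β ≤ a x * P x * (P x + Real.sqrt (F x)) := by nlinarith
      rw [hv]
      calc β * B x ≤ (a x * P x * (P x + Real.sqrt (F x))) * B x :=
            mul_le_mul_of_nonneg_right hk hBx
      _ = _ := by ring
    have hup : e t ≤ B t := by
      have key : ∀ ⦃x⦄, x ∈ Icc 0 t → e x ≤ B x := by
        refine image_le_of_deriv_right_lt_deriv_boundary
          (f := e) (f' := E') (B := B) (B' := B')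
          (hecont t) (fun x hx => (hederiv x hx.1).hasDerivWithinAt)
          (by
            simp only [hB_def]
            simp [le_abs_self]) hBderiv ?_
        intro x hx hcontact
        have hu2 : (Real.sqrt (F x))^2 = F x := Real.sq_sqrt (hFpos x hx.1).le
        have hee : P x - Real.sqrt (F x) = e x := by simp only [he_def]
        have hEx : E' x = -(a x * P x * (P x + Real.sqrt (F x))) * (e x)
            - F' x / (2 * Real.sqrt (F x)) := by
          simp only [hE'_def]
          rw [← hee]
          linear_combination (-(a x * P x)) * hu2
        have hd : -(F' x / (2 * Real.sqrt (F x))) ≤ M' := by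
          rw [hM'_def, ← neg_div]
          exact div_le_div₀ hM0 (le_trans (neg_le_abs _) (hMmem x ⟨hx.1, hx.2.le⟩))
            (by positivity) (by linarith [hsqF x hx.1])
        have hc := hcore x hx (e x) hcontact
        rw [hEx, hBeq x]
        linarith
      exact key ⟨ht, le_refl t⟩
    have hdown : -(e t) ≤ B t := by
      have key : ∀ ⦃x⦄, x ∈ Icc 0 t → -(e x) ≤ B x := by
        refine image_le_of_deriv_right_lt_deriv_boundary
          (f := fun s => -(e s)) (f' := fun s => -(E' s)) (B := B) (B' := B')
          ((hecont t).neg) (fun x hx => ((hederiv x hx.1).neg).hasDerivWithinAt)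
          (by
            simp only [hB_def]
            simp [neg_abs_le, neg_le_abs]) hBderiv ?_
        intro x hx hcontact
        have hu2 : (Real.sqrt (F x))^2 = F x := Real.sq_sqrt (hFpos x hx.1).le
        have hee : P x - Real.sqrt (F x) = e x := by simp only [he_def]
        have hEx : E' x = -(a x * P x * (P x + Real.sqrt (F x))) * (e x)
            - F' x / (2 * Real.sqrt (F x)) := by
          simp only [hE'_def]
          rw [← hee]
          linear_combination (-(a x * P x)) * hu2
        have hd : F' x / (2 * Real.sqrt (F x)) ≤ M' := by
          rw [hM'_def]
          exact div_le_div₀ hM0 (le_trans (le_abs_self _) (hMmem x ⟨hx.1, hx.2.le⟩))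
            (by positivity) (by linarith [hsqF x hx.1])
        have hc := hcore x hx (-(e x)) hcontact
        rw [mul_neg] at hc
        show -(E' x) < B' x
        rw [hEx, hBeq x]
        linarith
      exact key ⟨ht, le_refl t⟩
    have hBle : B t ≤ |e 0| * Real.exp (-β * t) + (M' + δ) / β := by
      simp only [hB_def]
      have he0 : (0:ℝ) < Real.exp (-β * t) := Real.exp_pos _
      have : (0:ℝ) ≤ (M' + δ) / β := by positivity
      nlinarith
    rw [abs_le]
    constructor <;> [linarith; linarith]
  have hfinal_e : |e t| ≤ |e 0| * Real.exp (-β * t) + M' / β := by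
    apply le_of_forall_sub_le
    intro ε hε
    have := hkey (β * ε) (by positivity)
    have heq : (M' + β * ε) / β = M' / β + ε := by field_simp
    rw [heq] at this
    linarith
  -- relate m-differences to e
  have habs_diff : ∀ (x y q : ℝ), 0 < x → 0 < y → 0 < q →
      |q / (x + q) - q / (y + q)| = q * |y - x| / ((x + q) * (y + q)) := by
    intro x y q hx hy hq
    have hxq : (0:ℝ) < x + q := by linarith
    have hyq : (0:ℝ) < y + q := by linarith
    have : q / (x + q) - q / (y + q) = q * (y - x) / ((x + q) * (y + q)) := by
      field_simp; ring
    rw [this, abs_div, abs_mul, abs_of_pos hq, abs_of_pos (mul_pos hxq hyq)]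
  have hPt := hPlow t ht
  have hP0 : sc ≤ P 0 := hP0l
  have hPt0 : (0:ℝ) < P t := lt_of_lt_of_le hsc hPt
  have hP00 : (0:ℝ) < P 0 := lt_of_lt_of_le hsc hP0
  have hqt : PHm ≤ PH t := hPHl t ht
  have hq0 : PHm ≤ PH 0 := hPHl 0 (le_refl 0)
  have hqt' : PH t ≤ PHM := hPHu t ht
  have hq0' : PH 0 ≤ PHM := hPHu 0 (le_refl 0)
  have hyt : sc ≤ Real.sqrt (F t) := hsqF t ht
  have hy0 : sc ≤ Real.sqrt (F 0) := hsqF 0 (le_refl 0)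
  have hy0' : Real.sqrt (F 0) ≤ sC := hsqFu 0 (le_refl 0)
  -- upper bound on |m t - m* t|
  have hΔt : |PH t / (P t + PH t) - PH t / (Real.sqrt (F t) + PH t)| ≤ L1 * |e t| := by
    rw [habs_diff (P t) (Real.sqrt (F t)) (PH t) hPt0 (by linarith) (by linarith)]
    have hee : |Real.sqrt (F t) - P t| = |e t| := by
      simp only [he_def]; rw [abs_sub_comm]
    rw [hee]
    have h1 : PH t * |e t| / ((P t + PH t) * (Real.sqrt (F t) + PH t))
        ≤ PHM * |e t| / ((sc + PHm) * (sc + PHm)) := by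
      apply div_le_div₀ (by positivity)
        (mul_le_mul_of_nonneg_right hqt' (abs_nonneg _)) (by positivity)
      nlinarith [abs_nonneg (e t)]
    calc PH t * |e t| / ((P t + PH t) * (Real.sqrt (F t) + PH t))
        ≤ PHM * |e t| / ((sc + PHm) * (sc + PHm)) := h1
    _ = L1 * |e t| := by rw [hL1_def]; ring
  -- lower bound at 0
  have hΔ0 : |e 0| ≤ K0 * |PH 0 / (P 0 + PH 0) - PH 0 / (Real.sqrt (F 0) + PH 0)| := by
    have heq0 := habs_diff (P 0) (Real.sqrt (F 0)) (PH 0) hP00 (by linarith) (by linarith)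
    have hee : |Real.sqrt (F 0) - P 0| = |e 0| := by
      simp only [he_def]; rw [abs_sub_comm]
    rw [hee] at heq0
    have h1 : PHm * |e 0| / ((sC + PHM) * (sC + PHM))
        ≤ PH 0 * |e 0| / ((P 0 + PH 0) * (Real.sqrt (F 0) + PH 0)) := by
      apply div_le_div₀ (mul_nonneg (by linarith) (abs_nonneg _))
        (mul_le_mul_of_nonneg_right hq0 (abs_nonneg _))
        (mul_pos (by linarith) (by linarith))
      nlinarith [abs_nonneg (e 0)]
    rw [← heq0] at h1
    rw [div_le_iff₀ (by positivity)] at h1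
    rw [hK0_def]
    rw [div_mul_eq_mul_div, le_div_iff₀ hPHm]
    nlinarith [abs_nonneg (PH 0 / (P 0 + PH 0) - PH 0 / (Real.sqrt (F 0) + PH 0))]
  -- assemble
  have hexp : (0:ℝ) < Real.exp (-β * t) := Real.exp_pos _
  calc |PH t / (P t + PH t) - PH t / (Real.sqrt (F t) + PH t)|
      ≤ L1 * |e t| := hΔt
  _ ≤ L1 * (|e 0| * Real.exp (-β * t) + M' / β) :=
      mul_le_mul_of_nonneg_left hfinal_e hL1.le
  _ ≤ L1 * ((K0 * |PH 0 / (P 0 + PH 0) - PH 0 / (Real.sqrt (F 0) + PH 0)|)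
        * Real.exp (-β * t) + M' / β) := by
      apply mul_le_mul_of_nonneg_left ?_ hL1.le
      have := mul_le_mul_of_nonneg_right hΔ0 hexp.le
      linarith
  _ = L1 * K0 * |PH 0 / (P 0 + PH 0) - PH 0 / (Real.sqrt (F 0) + PH 0)|
        * Real.exp (-β * t) + L1 / (2 * sc * β) * M := by
      rw [hM'_def]; field_simp
end

section
/- Let a : [0,∞) → ℝ be continuous, let F : [0,∞) → ℝ be differentiable with F(t) > 0 for all t ≥ 0, and let P : [0,∞) → ℝ be differentiable with P'(t) = a(t)·(F(t)·P(t) − P(t)³) for all t ≥ 0. Define V(t) = (1/2)·(P(t) − √F(t))². Then V is differentiable and for all t ≥ 0: V'(t) = −2·a(t)·P(t)·(P(t) + √F(t))·V(t) − F'(t)·(P(t) − √F(t))/(2√F(t)). -/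
/-- Derivative identity for the Lyapunov function V = (1/2)(P - √F)² along the
controller dynamics. -/
theorem stmt15 (a F F' P : ℝ → ℝ)
    (ha_cont : ContinuousOn a (Set.Ici (0:ℝ)))
    (hF_deriv : ∀ t ≥ (0:ℝ), HasDerivAt F (F' t) t)
    (hF_pos : ∀ t ≥ (0:ℝ), 0 < F t)
    (hP : ∀ t ≥ (0:ℝ), HasDerivAt P (a t * (F t * P t - (P t)^3)) t) :
    ∀ t ≥ (0:ℝ),
      HasDerivAt (fun s => (1/2) * (P s - Real.sqrt (F s))^2)
        (-2 * a t * P t * (P t + Real.sqrt (F t))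
            * ((1/2) * (P t - Real.sqrt (F t))^2)
          - F' t * (P t - Real.sqrt (F t)) / (2 * Real.sqrt (F t))) t := by
  intro t ht
  have hFt := hF_pos t ht
  have hspos : 0 < Real.sqrt (F t) := Real.sqrt_pos.mpr hFt
  have hsq : HasDerivAt (fun s => Real.sqrt (F s)) (F' t / (2 * Real.sqrt (F t))) t := by
    have := (Real.hasDerivAt_sqrt (ne_of_gt hFt)).comp t (hF_deriv t ht)
    simpa [div_eq_mul_inv, mul_comm, Function.comp_def] using this
  have h1 : HasDerivAt (fun s => (1/2) * (P s - Real.sqrt (F s))^2)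
      ((1/2) * ((2:ℕ) * (P t - Real.sqrt (F t))^(2-1)
        * (a t * (F t * P t - (P t)^3) - F' t / (2 * Real.sqrt (F t))))) t :=
    (((hP t ht).sub hsq).pow 2).const_mul (1/2)
  convert h1 using 1
  have hs : Real.sqrt (F t) ^ 2 = F t := Real.sq_sqrt hFt.le
  have hne : Real.sqrt (F t) ≠ 0 := ne_of_gt hspos
  field_simp
  ring_nf
  linear_combination (-4 * a t * P t * Real.sqrt (F t)^2 + 4 * a t * (P t)^2 * Real.sqrt (F t)) * hs
end
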